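/- If φ is a skeleton of a strategy σ on a justified AJM game A, then φ• = σ, where φ• = { t | ∃ s ∈ φ, s ≈_A t }. -/

import Mathlib

/- Justified AJM games, after Abramsky's game semantics for access control. -/

namespace AJM

inductive Pol where
  | P
  | O
deriving DecidableEq

inductive QA where
  | Q
  | Ans
deriving DecidableEq

def Pol.flip : Pol → Pol
  | .P => .O
  | .O => .P

/-- Well-bracketed strings over moves (condition (p4)). -/
inductive WB {M : Type} (lab : M → Pol × QA) (just : M → Option M) : List M → Prop
  | nil : WB lab just []
  | wrap (a q : M) (u : List M) : (lab a).2 = QA.Ans → just a = some q →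
      WB lab just u → WB lab just (q :: (u ++ [a]))
  | append (u v : List M) : WB lab just u → WB lab just v → WB lab just (u ++ v)

/-- Conditions (p1)–(p5): Opponent starts, alternation, linearity,
well-bracketing, justifiers occur before their moves. -/
def ValidSeq {M : Type} (lab : M → Pol × QA) (just : M → Option M) (s : List M) : Prop :=
  (∀ m, s.head? = some m → (lab m).1 = Pol.O) ∧
  List.Chain' (fun m m' => (lab m).1 ≠ (lab m').1) s ∧
  s.Nodup ∧
  (∃ t, s <+: t ∧ WB lab just t) ∧
  (∀ s₁ m s₂, s = s₁ ++ m :: s₂ → ∀ m', just m = some m' → m' ∈ s₁)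

/-- A justified AJM game (the data). -/
structure Game where
  M : Type
  lab : M → Pol × QA
  just : M → Option M
  pos : Set (List M)
  equiv : List M → List M → Prop

namespace Game

/-- The axioms making the data of a `Game` an actual justified AJM game. -/
structure Valid (A : Game) : Prop where
  just_wf : WellFounded fun m m' : A.M => A.just m' = some m
  just_pol : ∀ m m', A.just m = some m' → (A.lab m).1 ≠ (A.lab m').1
  just_qa : ∀ m m', A.just m = some m' → (A.lab m).2 = QA.Ans → (A.lab m').2 = QA.Q
  ans_justified : ∀ m, (A.lab m).2 = QA.Ans → A.just m ≠ none
  pos_nonempty : A.pos.Nonempty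
  pos_prefix_closed : ∀ s t : List A.M, s <+: t → t ∈ A.pos → s ∈ A.pos
  pos_valid : ∀ s ∈ A.pos, ValidSeq A.lab A.just s
  equiv_mem : ∀ s t, A.equiv s t → s ∈ A.pos ∧ t ∈ A.pos
  equiv_refl : ∀ s ∈ A.pos, A.equiv s s
  equiv_symm : ∀ s t, A.equiv s t → A.equiv t s
  equiv_trans : ∀ s t u, A.equiv s t → A.equiv t u → A.equiv s u
  equiv_lab : ∀ s t, A.equiv s t → s.map A.lab = t.map A.lab
  equiv_prefix : ∀ s t s' t', A.equiv s t → s' <+: s → t' <+: t →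
      s'.length = t'.length → A.equiv s' t'
  equiv_ext : ∀ s t a, A.equiv s t → s ++ [a] ∈ A.pos → ∃ b, A.equiv (s ++ [a]) (t ++ [b])

/-- A strategy on a game: a non-empty set of even-length positions that is
causally consistent, representation independent and deterministic. -/
structure IsStrategy (A : Game) (σ : Set (List A.M)) : Prop where
  subset_pos : σ ⊆ A.pos
  even_length : ∀ s ∈ σ, Even s.length
  nonempty : σ.Nonempty
  causal : ∀ s a b, s ++ [a, b] ∈ σ → s ∈ σ
  repind : ∀ s t, s ∈ σ → A.equiv s t → t ∈ σ
  det : ∀ s t a b a' b', s ++ [a, b] ∈ σ → t ++ [a', b'] ∈ σ →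
      A.equiv (s ++ [a]) (t ++ [a']) → A.equiv (s ++ [a, b]) (t ++ [a', b'])

/-- A skeleton of a strategy `σ`: a non-empty, causally consistent subset of
`σ` satisfying Uniformization. -/
structure IsSkeletonOf (A : Game) (φ σ : Set (List A.M)) : Prop where
  nonempty : φ.Nonempty
  subset : φ ⊆ σ
  causal : ∀ s a b, s ++ [a, b] ∈ φ → s ∈ φ
  uniformization : ∀ s a b, s ++ [a, b] ∈ σ → s ∈ φ → ∃! b', s ++ [a, b'] ∈ φ

/-- A skeleton in the abstract sense (independently of any strategy):
a non-empty, causally consistent set of even-length positions satisfying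
Functional Determinacy and Functional Representation Independence. -/
structure IsSkeleton (A : Game) (φ : Set (List A.M)) : Prop where
  subset_pos : φ ⊆ A.pos
  even_length : ∀ s ∈ φ, Even s.length
  nonempty : φ.Nonempty
  causal : ∀ s a b, s ++ [a, b] ∈ φ → s ∈ φ
  funDet : ∀ s a b c, s ++ [a, b] ∈ φ → s ++ [a, c] ∈ φ → b = c
  funRepInd : ∀ s t a b a', s ++ [a, b] ∈ φ → t ∈ φ →
      A.equiv (s ++ [a]) (t ++ [a']) →
      ∃! b', t ++ [a', b'] ∈ φ ∧ A.equiv (s ++ [a, b]) (t ++ [a', b'])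

/-- `φ• = { t | ∃ s ∈ φ, s ≈_A t }`, the saturation of `φ` under `≈_A`. -/
def dot (A : Game) (φ : Set (List A.M)) : Set (List A.M) :=
  {t | ∃ s ∈ φ, A.equiv s t}

/-- The preorder `φ ⊑ ψ` on skeletons. -/
def Subeq (A : Game) (φ ψ : Set (List A.M)) : Prop :=
  ∀ s a b s' a', s ++ [a, b] ∈ φ → s' ∈ ψ → A.equiv (s ++ [a]) (s' ++ [a']) →
    ∃ b', s' ++ [a', b'] ∈ ψ ∧ A.equiv (s ++ [a, b]) (s' ++ [a', b'])

end Game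

end AJM

/-!
Since `φ ⊆ σ` and `σ` is closed under `≈_A`, only `σ ⊆ φ•` needs an argument, by induction on
positions two moves at a time. Given `v ++ [a, b] ∈ σ` and `s ∈ φ` with `s ≈_A v`, extension (e3)
transports the pair to `s ++ [a', b''] ≈_A v ++ [a, b]`, which lies in `σ`; Uniformization replaces
`b''` by the skeleton's answer `b'`, and Determinacy of `σ` gives `s ++ [a', b'] ≈_A v ++ [a, b]`.
-/

theorem List.even_length_induction {α : Type*} {P : List α → Prop} (nil : P [])
    (append_pair : ∀ v a b, P v → P (v ++ [a, b])) (s : List α) (hs : Even s.length) : P s := by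
  induction hn : s.length using Nat.strong_induction_on generalizing s with
  | _ n ih =>
    rcases s.eq_nil_or_concat with rfl | ⟨u, b, rfl⟩
    · exact nil
    rcases u.eq_nil_or_concat with rfl | ⟨v, a, rfl⟩
    · simp at hs
    · have hv : Even v.length := by simpa [parity_simps] using hs
      simpa using append_pair v a b (ih v.length (by simp at hn; omega) v hv rfl)

namespace AJM.Game

variable {A : Game} {σ φ : Set (List A.M)}

theorem Valid.nil_mem_pos (hA : A.Valid) : ([] : List A.M) ∈ A.pos :=
  let ⟨_, hp⟩ := hA.pos_nonempty
  hA.pos_prefix_closed [] _ List.nil_prefix hp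

theorem IsSkeletonOf.nil_mem (hσ : IsStrategy A σ) (hφ : IsSkeletonOf A φ σ) :
    ([] : List A.M) ∈ φ := by
  obtain ⟨s, hs⟩ := hφ.nonempty
  exact List.even_length_induction (P := fun s => s ∈ φ → [] ∈ φ) id
    (fun v a b ih h => ih (hφ.causal v a b h)) s (hσ.even_length s (hφ.subset hs)) hs

theorem IsSkeletonOf.exists_append_pair (hA : A.Valid) (hσ : IsStrategy A σ)
    (hφ : IsSkeletonOf A φ σ) {s v : List A.M} {a b : A.M} (hs : s ∈ φ) (hsv : A.equiv s v)
    (hvab : v ++ [a, b] ∈ σ) :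
    ∃ a' b', s ++ [a', b'] ∈ φ ∧ A.equiv (s ++ [a', b']) (v ++ [a, b]) := by
  have hvab' : v ++ [a] ++ [b] ∈ σ := by simpa using hvab
  have hva_pos : v ++ [a] ∈ A.pos :=
    hA.pos_prefix_closed _ _ (List.prefix_append _ _) (hσ.subset_pos hvab')
  obtain ⟨a', ha'⟩ := hA.equiv_ext v s a (hA.equiv_symm _ _ hsv) hva_pos
  obtain ⟨b'', hb''⟩ := hA.equiv_ext _ _ b ha' (hσ.subset_pos hvab')
  have hsab'' : s ++ [a', b''] ∈ σ := by simpa using hσ.repind _ _ hvab' hb''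
  obtain ⟨b', hb', -⟩ := hφ.uniformization s a' b'' hsab'' hs
  exact ⟨a', b', hb', hA.equiv_symm _ _ (hσ.det v s a b a' b' hvab (hφ.subset hb') ha')⟩

theorem IsSkeletonOf.subset_dot (hA : A.Valid) (hσ : IsStrategy A σ)
    (hφ : IsSkeletonOf A φ σ) : σ ⊆ dot A φ := by
  intro t ht
  refine List.even_length_induction (P := fun t => t ∈ σ → t ∈ dot A φ)
    (fun _ => ⟨[], hφ.nil_mem hσ, hA.equiv_refl [] hA.nil_mem_pos⟩) ?_ t
    (hσ.even_length t ht) ht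
  rintro v a b ih hvab
  obtain ⟨s, hs, hsv⟩ := ih (hσ.causal v a b hvab)
  obtain ⟨a', b', hsab, hequiv⟩ := hφ.exists_append_pair hA hσ hs hsv hvab
  exact ⟨_, hsab, hequiv⟩

theorem IsStrategy.dot_subset (hσ : IsStrategy A σ) (hφσ : φ ⊆ σ) : dot A φ ⊆ σ :=
  fun _ ⟨s, hs, hst⟩ => hσ.repind s _ (hφσ hs) hst

end AJM.Game

open AJM Game in
/-- If `φ` is a skeleton of a strategy `σ`, then `φ• = σ`. -/
theorem dot_of_skeletonOf (A : Game) (hA : A.Valid)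
    (σ φ : Set (List A.M)) (hσ : IsStrategy A σ) (hφ : IsSkeletonOf A φ σ) :
    dot A φ = σ :=
  (hσ.dot_subset hφ.subset).antisymm (hφ.subset_dot hA hσ)
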